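/- For every i ∈ {1, ..., n}, every polymorphism of the structure 𝔅 (of any arity k ≥ 1) is compatible with the equivalence relation β_i on B whose blocks are {a_1, a_2, 0, ..., i−1}, {i}, {i+1}, ..., {n}, regarded as a binary relation on B. -/
import Mathlib


/- The universe `B = {a₁, a₂, 0, 1, ..., n}` of size `n+3` is encoded as
`Fin (n+3)`, where `a₁` is encoded as `0`, `a₂` as `1`, and the element
`i ∈ {0, ..., n}` as `i+2`; this encoding is order-preserving for the order
`a₁ < a₂ < 0 < 1 < ⋯ < n`. -/

/-- Compatibility with a binary relation, given as a set of pairs. -/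
def Compat2 {A : Type*} {k : ℕ} (t : (Fin k → A) → A) (S : Set (A × A)) : Prop :=
  ∀ u w : Fin k → A, (∀ j, (u j, w j) ∈ S) → (t u, t w) ∈ S

/-- Compatibility with a unary relation `X`: `t` maps `X^k` into `X`. -/
def CompatUnary {A : Type*} {k : ℕ} (t : (Fin k → A) → A) (X : Set A) : Prop :=
  ∀ u : Fin k → A, (∀ j, u j ∈ X) → t u ∈ X

/-- An operation `t : A^k → A` is a near-unanimity (NU) operation if `k ≥ 3` and
any tuple whose coordinates all equal `x` except possibly one coordinate (with
value `y`) is mapped to the majority value `x`. -/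
def IsNU {A : Type*} {k : ℕ} (t : (Fin k → A) → A) : Prop :=
  3 ≤ k ∧ ∀ (x y : A) (j : Fin k), t (Function.update (fun _ => x) j y) = x

/-- The binary relation `R^i_j ⊆ B²` (for `i ∈ {0,…,n}`, `j ∈ {1,2}`):
`(({a₁,a₂,0,…,i-1} × {a₁,a₂,i}) \ {(a_j, i)}) ∪ {(l,l) : i+1 ≤ l ≤ n}`.
In the encoding: the first coordinate has value `≤ i+1`, the second has value `0`,
`1` or `i+2`, excluding the pair `(j-1, i+2)`; the diagonal pairs have value `≥ i+3`. -/
def Rb (n i j : ℕ) : Set (Fin (n + 3) × Fin (n + 3)) :=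
  {p | (p.1.val ≤ i + 1 ∧ (p.2.val = 0 ∨ p.2.val = 1 ∨ p.2.val = i + 2) ∧
          ¬(p.1.val = j - 1 ∧ p.2.val = i + 2)) ∨
        (p.1 = p.2 ∧ i + 3 ≤ p.1.val)}

/-- A polymorphism of the structure `𝔅 = (B; R¹₁, R¹₂, …, Rⁿ₁, Rⁿ₂, (X)_{∅ ≠ X ⊆ B})`:
an operation compatible with each `R^i_j` and with every nonempty unary relation. -/
def PolyB (n : ℕ) {k : ℕ} (t : (Fin k → Fin (n + 3)) → Fin (n + 3)) : Prop :=
  (∀ i ≤ n, ∀ j, (j = 1 ∨ j = 2) → Compat2 t (Rb n i j)) ∧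
  (∀ X : Set (Fin (n + 3)), X.Nonempty → CompatUnary t X)

/-- The equivalence relation `β_i` on `B` with blocks
`{a₁, a₂, 0, …, i-1}, {i}, {i+1}, …, {n}`. -/
def betaRel (n i : ℕ) : Set (Fin (n + 3) × Fin (n + 3)) :=
  {p | (p.1.val ≤ i + 1 ∧ p.2.val ≤ i + 1) ∨ p.1 = p.2}


/-- Key lemma: iteratively crushing all values `< m+3` to `1` (which is possible
against the relations `R^0₁, …, R^m₁` read backwards, plus conservativity coming
from the unary relations) computes a "normal form" whose image under `t` is
determined by `t u`. -/
lemma rb_crush {n k : ℕ} (t : (Fin k → Fin (n + 3)) → Fin (n + 3)) (ht : PolyB n t) :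
    ∀ m, m ≤ n → ∀ u : Fin k → Fin (n + 3),
      t (fun j => if m + 3 ≤ (u j).val then u j else 1) =
        if m + 3 ≤ (t u).val then t u else 1 := by
  have h1 : (1 : Fin (n + 3)).val = 1 := Fin.val_one (n + 1)
  intro m
  induction m with
  | zero =>
    intro hm u
    set V : Fin k → Fin (n + 3) := fun j => if 0 + 3 ≤ (u j).val then u j else 1 with hV
    have hrel : (t V, t u) ∈ Rb n 0 1 := by
      apply ht.1 0 (Nat.zero_le n) 1 (Or.inl rfl)
      intro j
      simp only [hV, Rb, Set.mem_setOf_eq]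
      by_cases h : 0 + 3 ≤ (u j).val
      · rw [if_pos h]; exact Or.inr ⟨rfl, h⟩
      · rw [if_neg h]; exact Or.inl ⟨by omega, by omega, by omega⟩
    have hX : t V ∈ {x : Fin (n + 3) | x.val = 1 ∨ 0 + 3 ≤ x.val} := by
      apply ht.2 _ ⟨1, Or.inl h1⟩
      intro j
      simp only [hV, Set.mem_setOf_eq]
      by_cases h : 0 + 3 ≤ (u j).val
      · rw [if_pos h]; exact Or.inr h
      · rw [if_neg h]; exact Or.inl h1
    simp only [Rb, Set.mem_setOf_eq] at hrel
    simp only [Set.mem_setOf_eq] at hX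
    by_cases hc : 0 + 3 ≤ (t u).val
    · rw [if_pos hc]
      rcases hrel with ⟨_, h2, _⟩ | ⟨heq, _⟩
      · exact absurd h2 (by omega)
      · exact heq
    · rw [if_neg hc]
      rcases hrel with ⟨hle, _, _⟩ | ⟨heq, hge⟩
      · exact Fin.ext (by omega)
      · rw [heq] at hge; exact absurd hge (by omega)
  | succ m ih =>
    intro hm u
    have ihm := ih (by omega) u
    set Vm : Fin k → Fin (n + 3) := fun j => if m + 3 ≤ (u j).val then u j else 1 with hVm
    set V : Fin k → Fin (n + 3) := fun j => if m + 1 + 3 ≤ (u j).val then u j else 1 with hV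
    have hrel : (t V, t Vm) ∈ Rb n (m + 1) 1 := by
      apply ht.1 (m + 1) hm 1 (Or.inl rfl)
      intro j
      simp only [hV, hVm, Rb, Set.mem_setOf_eq]
      by_cases h4 : m + 1 + 3 ≤ (u j).val
      · rw [if_pos h4, if_pos (by omega : m + 3 ≤ (u j).val)]
        exact Or.inr ⟨rfl, h4⟩
      · rw [if_neg h4]
        by_cases h3 : m + 3 ≤ (u j).val
        · rw [if_pos h3]; exact Or.inl ⟨by omega, by omega, by omega⟩
        · rw [if_neg h3]; exact Or.inl ⟨by omega, by omega, by omega⟩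
    have hX : t V ∈ {x : Fin (n + 3) | x.val = 1 ∨ m + 1 + 3 ≤ x.val} := by
      apply ht.2 _ ⟨1, Or.inl h1⟩
      intro j
      simp only [hV, Set.mem_setOf_eq]
      by_cases h : m + 1 + 3 ≤ (u j).val
      · rw [if_pos h]; exact Or.inr h
      · rw [if_neg h]; exact Or.inl h1
    simp only [Rb, Set.mem_setOf_eq] at hrel
    simp only [Set.mem_setOf_eq] at hX
    by_cases hc : m + 1 + 3 ≤ (t u).val
    · rw [if_pos hc]
      rw [if_pos (by omega : m + 3 ≤ (t u).val)] at ihm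
      rcases hrel with ⟨_, h2, _⟩ | ⟨heq, _⟩
      · rw [ihm] at h2; exact absurd h2 (by omega)
      · rw [heq, ihm]
    · rw [if_neg hc]
      by_cases hc3 : m + 3 ≤ (t u).val
      · rw [if_pos hc3] at ihm
        rcases hrel with ⟨hle, _, _⟩ | ⟨heq, hge⟩
        · exact Fin.ext (by omega)
        · rw [heq, ihm] at hge; exact absurd hge (by omega)
      · rw [if_neg hc3] at ihm
        rcases hrel with ⟨hle, _, _⟩ | ⟨heq, hge⟩
        · exact Fin.ext (by omega)
        · rw [heq, ihm, h1] at hge; exact absurd hge (by omega)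

theorem stmt13 (n : ℕ) (i : ℕ) (hi1 : 1 ≤ i) (hi2 : i ≤ n)
    (k : ℕ) (hk : 1 ≤ k) (t : (Fin k → Fin (n + 3)) → Fin (n + 3))
    (ht : PolyB n t) :
    Compat2 t (betaRel n i) := by
  have h1 : (1 : Fin (n + 3)).val = 1 := Fin.val_one (n + 1)
  intro u w hpair
  have hu := rb_crush t ht (i - 1) (by omega) u
  have hw := rb_crush t ht (i - 1) (by omega) w
  have e : i - 1 + 3 = i + 2 := by omega
  rw [e] at hu hw
  have hsame : (fun j => if i + 2 ≤ (u j).val then u j else (1 : Fin (n + 3))) =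
      (fun j => if i + 2 ≤ (w j).val then w j else 1) := by
    funext j
    have hp := hpair j
    simp only [betaRel, Set.mem_setOf_eq] at hp
    rcases hp with ⟨h1', h2'⟩ | heq
    · rw [if_neg (by omega), if_neg (by omega)]
    · rw [heq]
  rw [hsame, hw] at hu
  simp only [betaRel, Set.mem_setOf_eq]
  by_cases hc : i + 2 ≤ (t u).val
  · rw [if_pos hc] at hu
    by_cases hd : i + 2 ≤ (t w).val
    · rw [if_pos hd] at hu; exact Or.inr hu.symm
    · rw [if_neg hd] at hu
      exfalso
      have : (t u).val = 1 := by rw [← hu, h1]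
      omega
  · by_cases hd : i + 2 ≤ (t w).val
    · rw [if_neg hc, if_pos hd] at hu
      exfalso
      have : (t w).val = 1 := by rw [hu, h1]
      omega
    · exact Or.inl ⟨by omega, by omega⟩
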